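/- arXiv:2106.09364 — 2 statements merged into one kernel-verified Lean document; each statement's English description precedes it below -/
import Mathlib

section
/- Let A ⊂ ℝ^d be a uniformly discrete set. Then for every α > 0 there exists β > 0 such that the double sum ∑_{r∈A} ∑_{s∈A} (1+|r|)^α (1+|s|)^α (1+|r+s|)^{-β} (1+|r-s|)^{-β} converges (is finite). -/
/-!
Since `2‖r‖, 2‖s‖ ≤ ‖r + s‖ + ‖r - s‖`, the product `(1 + ‖r + s‖)(1 + ‖r - s‖)` dominates both
`1 + ‖r‖` and `1 + ‖s‖`, so for `β = 2(α + t)` each term of the double series is at most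
`(1 + ‖r‖)^(-t) (1 + ‖s‖)^(-t)`. For `t > d` this product is summable over `A × A`: the balls of
radius `δ/2` around the points of `A` are disjoint, and on the ball around `r` the integrand
`(1 + ‖x‖)^(-t)` is at least a constant multiple of `(1 + ‖r‖)^(-t)`, so the sum over `A` is
bounded by a multiple of the finite integral of `(1 + ‖x‖)^(-t)` over `ℝ^d`.
-/

open MeasureTheory Complex BigOperators

noncomputable section

def UnifDiscrete {E : Type*} [PseudoMetricSpace E] (A : Set E) : Prop :=
  ∃ δ : ℝ, 0 < δ ∧ ∀ x ∈ A, ∀ y ∈ A, x ≠ y → δ ≤ dist x y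

open Function Metric Module

lemma one_add_norm_le_mul_one_add_norm_add_sub {E : Type*} [SeminormedAddCommGroup E]
    [NormedSpace ℝ E] (r s : E) : 1 + ‖r‖ ≤ (1 + ‖r + s‖) * (1 + ‖r - s‖) := by
  have h : 2 * ‖r‖ ≤ ‖r + s‖ + ‖r - s‖ :=
    calc 2 * ‖r‖ = ‖(r + s) + (r - s)‖ := by
          rw [add_add_sub_cancel, ← two_smul ℝ, norm_smul, Real.norm_two]
      _ ≤ ‖r + s‖ + ‖r - s‖ := norm_add_le _ _
  nlinarith [norm_nonneg r, mul_nonneg (norm_nonneg (r + s)) (norm_nonneg (r - s))]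

lemma one_add_norm_rpow_mul_one_add_norm_add_sub_rpow_neg_le {E : Type*}
    [SeminormedAddCommGroup E] [NormedSpace ℝ E] (r s : E) {α t : ℝ} (hαt : 0 ≤ α + t) :
    (1 + ‖r‖) ^ α * (1 + ‖s‖) ^ α * (1 + ‖r + s‖) ^ (-(2 * (α + t))) *
      (1 + ‖r - s‖) ^ (-(2 * (α + t))) ≤ (1 + ‖r‖) ^ (-t) * (1 + ‖s‖) ^ (-t) := by
  set Q := (1 + ‖r‖) * (1 + ‖s‖)
  set P := (1 + ‖r + s‖) * (1 + ‖r - s‖)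
  have hQ : Q ≤ P ^ 2 := by
    have hs : 1 + ‖s‖ ≤ P := by
      simpa only [P, add_comm s, norm_sub_rev s] using
        one_add_norm_le_mul_one_add_norm_add_sub s r
    rw [sq]
    exact mul_le_mul (one_add_norm_le_mul_one_add_norm_add_sub r s) hs (by positivity)
      (by positivity)
  calc (1 + ‖r‖) ^ α * (1 + ‖s‖) ^ α * (1 + ‖r + s‖) ^ (-(2 * (α + t))) *
        (1 + ‖r - s‖) ^ (-(2 * (α + t)))
      = Q ^ α * (P ^ 2) ^ (-(α + t)) := by
        rw [← Real.rpow_natCast, ← Real.rpow_mul (by positivity), mul_assoc _ (_ ^ _),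
          Real.mul_rpow (by positivity) (by positivity),
          Real.mul_rpow (by positivity) (by positivity)]
        push_cast
        ring_nf
    _ ≤ Q ^ α * Q ^ (-(α + t)) :=
        mul_le_mul_of_nonneg_left
          (Real.rpow_le_rpow_of_nonpos (by positivity) hQ (by linarith)) (by positivity)
    _ = (1 + ‖r‖) ^ (-t) * (1 + ‖s‖) ^ (-t) := by
        rw [← Real.rpow_add (by positivity), show α + -(α + t) = -t by ring,
          Real.mul_rpow (by positivity) (by positivity)]

lemma measureReal_ball_mul_le_setIntegral_one_add_norm_rpow_neg {E : Type*}
    [NormedAddCommGroup E] [NormedSpace ℝ E] [FiniteDimensional ℝ E] [MeasurableSpace E]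
    [BorelSpace E] (μ : Measure E) [μ.IsAddHaarMeasure] {t : ℝ} (ht : (finrank ℝ E : ℝ) < t)
    (r : E) {ρ : ℝ} (hρ : 0 ≤ ρ) :
    μ.real (ball (0 : E) ρ) * ((1 + ρ) ^ (-t) * (1 + ‖r‖) ^ (-t)) ≤
      ∫ x in ball r ρ, (1 + ‖x‖) ^ (-t) ∂μ := by
  have ht0 : 0 ≤ t := (Nat.cast_nonneg _).trans ht.le
  rw [← Measure.addHaar_real_ball_center μ r, ← smul_eq_mul]
  refine setIntegral_ge_of_const_le measurableSet_ball measure_ball_lt_top.ne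
    (fun x hx => ?_) (integrable_one_add_norm ht).integrableOn
  rw [← Real.mul_rpow (by positivity) (by positivity)]
  refine Real.rpow_le_rpow_of_nonpos (by positivity) ?_ (by linarith)
  have : ‖x‖ ≤ ‖r‖ + ρ := by
    linarith [mem_ball_iff_norm.1 hx, norm_le_norm_add_norm_sub' x r]
  nlinarith [norm_nonneg r]

lemma UnifDiscrete.summable_one_add_norm_rpow_neg {E : Type*} [NormedAddCommGroup E]
    [NormedSpace ℝ E] [FiniteDimensional ℝ E] {A : Set E} (hA : UnifDiscrete A) {t : ℝ}
    (ht : (finrank ℝ E : ℝ) < t) : Summable (fun r : A => (1 + ‖(r : E)‖) ^ (-t)) := by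
  borelize E
  let μ : Measure E := Measure.addHaar
  obtain ⟨δ, hδ, hsep⟩ := hA
  set ρ := δ / 2
  have hρ : 0 < ρ := half_pos hδ
  set f : E → ℝ := fun x => (1 + ‖x‖) ^ (-t)
  have hf : Integrable f μ := integrable_one_add_norm ht
  set c := μ.real (ball (0 : E) ρ) * (1 + ρ) ^ (-t)
  have hc : 0 < c := mul_pos
    (ENNReal.toReal_pos (measure_ball_pos μ 0 hρ).ne' measure_ball_lt_top.ne) (by positivity)
  have hdisj : Set.Pairwise (Set.univ : Set A) (Disjoint on fun r : A => ball (r : E) ρ) :=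
    fun r _ s _ hrs => ball_disjoint_ball <| by
      simpa only [ρ, add_halves] using hsep r r.2 s s.2 (Subtype.coe_ne_coe.2 hrs)
  refine summable_of_sum_le (c := (∫ x, f x ∂μ) / c) (fun r => by positivity) fun u => ?_
  rw [le_div_iff₀' hc]
  calc c * ∑ r ∈ u, f r
      = ∑ r ∈ u, μ.real (ball (0 : E) ρ) * ((1 + ρ) ^ (-t) * f r) := by
        simp only [c, Finset.mul_sum, mul_assoc]
    _ ≤ ∑ r ∈ u, ∫ x in ball (r : E) ρ, f x ∂μ := Finset.sum_le_sum fun r _ =>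
        measureReal_ball_mul_le_setIntegral_one_add_norm_rpow_neg μ ht r hρ.le
    _ = ∫ x in ⋃ r ∈ u, ball (r : E) ρ, f x ∂μ :=
        (integral_biUnion_finset u (fun _ _ => measurableSet_ball)
          (hdisj.mono (Set.subset_univ _)) fun _ _ => hf.integrableOn).symm
    _ ≤ ∫ x, f x ∂μ :=
        setIntegral_le_integral hf (Filter.Eventually.of_forall fun x => by positivity)

/-- For a uniformly discrete `A ⊆ ℝ^d` and every `α > 0` there is `β > 0` making the
double series `∑_{r,s ∈ A} (1+|r|)^α (1+|s|)^α (1+|r+s|)^{-β} (1+|r-s|)^{-β}` convergent. -/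
theorem stmt1 {d : ℕ} (A : Set (EuclideanSpace ℝ (Fin d))) (hA : UnifDiscrete A)
    (α : ℝ) (hα : 0 < α) :
    ∃ β : ℝ, 0 < β ∧ Summable (fun p : (↥A) × (↥A) =>
      (1 + ‖(p.1 : EuclideanSpace ℝ (Fin d))‖) ^ α *
      (1 + ‖(p.2 : EuclideanSpace ℝ (Fin d))‖) ^ α *
      (1 + ‖(p.1 : EuclideanSpace ℝ (Fin d)) + (p.2 : EuclideanSpace ℝ (Fin d))‖) ^ (-β) *
      (1 + ‖(p.1 : EuclideanSpace ℝ (Fin d)) - (p.2 : EuclideanSpace ℝ (Fin d))‖) ^ (-β)) := by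
  set t : ℝ := d + 1
  have ht : (finrank ℝ (EuclideanSpace ℝ (Fin d)) : ℝ) < t := by simp [t]
  have hsum := hA.summable_one_add_norm_rpow_neg ht
  refine ⟨2 * (α + t), by positivity, ?_⟩
  refine .of_nonneg_of_le (fun p => by positivity) (fun p => ?_)
    (hsum.mul_of_nonneg hsum (fun r => by positivity) fun r => by positivity)
  exact one_add_norm_rpow_mul_one_add_norm_add_sub_rpow_neg_le _ _ (by positivity)
end
end

section
/- Fix d ≥ 1 and N ≥ 1. For γ ∈ ℕ^d, let F_γ = {(α,β) ∈ ℕ^d × ℕ^d : |α| = |β| = |γ| and α + β = 2γ}, where |α| = α_1 + ⋯ + α_d. Suppose a family of complex numbers {a^γ : γ ∈ ℕ^d} satisfies ∑_{(α,β)∈F_γ} a^α · conj(a^β) = 0 for every γ ∈ ℕ^d with |γ| = N. Then a^γ = 0 for every γ with |γ| = N. -/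
open MeasureTheory Complex BigOperators

noncomputable section

/-- The length `|γ| = γ₁ + ⋯ + γ_d` of a multi-index. -/
def mdeg {d : ℕ} (γ : Fin d → ℕ) : ℕ := ∑ i, γ i

/-- The set `F_γ = {(α, β) : |α| = |β| = |γ|, α + β = 2γ}`. -/
def Fset {d : ℕ} (γ : Fin d → ℕ) : Set ((Fin d → ℕ) × (Fin d → ℕ)) :=
  {p | mdeg p.1 = mdeg γ ∧ mdeg p.2 = mdeg γ ∧ p.1 + p.2 = fun i => 2 * γ i}

/-! Among the multi-indices `γ` of length `N` with `a^γ ≠ 0` pick the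
lexicographically largest one. If `α + β = 2γ` and `α ≠ γ`, then at the first index where
`α` and `γ` differ one of `α`, `β` exceeds `γ`, so one of them is lexicographically larger
than `γ`. Hence the only nonzero term of the sum over `F_γ` is `|a^γ|²`, a contradiction. -/

theorem finite_setOf_mdeg_eq (d N : ℕ) : {γ : Fin d → ℕ | mdeg γ = N}.Finite := by
  refine (Set.finite_Icc (0 : Fin d → ℕ) fun _ => N).subset ?_
  rintro γ rfl
  exact ⟨fun _ => Nat.zero_le _,
    fun i => Finset.single_le_sum (fun j _ => Nat.zero_le (γ j)) (Finset.mem_univ i)⟩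

theorem Pi.toLex_lt_or_toLex_lt_of_add_eq_add_self {ι M : Type*} [LinearOrder ι]
    [WellFoundedLT ι] [AddCommMonoid M] [LinearOrder M] [IsOrderedCancelAddMonoid M]
    {α β γ : ι → M} (hsum : α + β = γ + γ) (hne : α ≠ γ) :
    toLex γ < toLex α ∨ toLex γ < toLex β := by
  refine (lt_or_gt_of_ne (toLex.injective.ne hne)).symm.imp_right ?_
  rintro ⟨i, hbelow, hlt⟩
  have hsum_at (j : ι) : α j + β j = γ j + γ j := congrFun hsum j
  refine ⟨i, fun j hj => ?_, ?_⟩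
  · have := hsum_at j
    rw [show α j = γ j from hbelow j hj] at this
    exact (add_left_cancel this).symm
  · by_contra! hle
    exact (add_lt_add_of_lt_of_le hlt hle).ne (hsum_at i)

theorem finsum_Fset_eq_normSq {d : ℕ} (a : (Fin d → ℕ) → ℂ) (γ : Fin d → ℕ)
    (hvanish : ∀ α, mdeg α = mdeg γ → toLex γ < toLex α → a α = 0) :
    ∑ᶠ p ∈ Fset γ, a p.1 * (starRingEnd ℂ) (a p.2) = normSq (a γ) := by
  have hdouble : (fun i => 2 * γ i) = γ + γ := funext fun i => two_mul (γ i)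
  have hdiag : (γ, γ) ∈ Fset γ := ⟨rfl, rfl, hdouble.symm⟩
  rw [finsum_mem_def, finsum_eq_single _ (γ, γ), Set.indicator_of_mem hdiag, mul_conj]
  rintro ⟨α, β⟩ hne
  refine Set.indicator_apply_eq_zero.mpr fun ⟨hα, hβ, hsum⟩ => ?_
  have hαγ : α ≠ γ := by
    rintro rfl
    exact hne (Prod.ext rfl (add_left_cancel (hsum.trans hdouble)))
  rcases Pi.toLex_lt_or_toLex_lt_of_add_eq_add_self (hsum.trans hdouble) hαγ with hlt | hlt
  · simp [hvanish α hα hlt]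
  · simp [hvanish β hβ hlt]

theorem stmt2_general {d N : ℕ} (a : (Fin d → ℕ) → ℂ)
    (h : ∀ γ : Fin d → ℕ, mdeg γ = N →
      ∑ᶠ p ∈ Fset γ, a p.1 * (starRingEnd ℂ) (a p.2) = 0) :
    ∀ γ : Fin d → ℕ, mdeg γ = N → a γ = 0 := by
  by_contra! ⟨γ₁, hγ₁N, hγ₁⟩
  set S := {γ : Fin d → ℕ | mdeg γ = N ∧ a γ ≠ 0}
  have hSfin : S.Finite := (finite_setOf_mdeg_eq d N).subset fun _ hγ => hγ.1
  obtain ⟨γ₀, ⟨hγ₀N, hγ₀⟩, hmax⟩ := hSfin.exists_maximalFor toLex S ⟨γ₁, hγ₁N, hγ₁⟩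
  have hvanish (α : Fin d → ℕ) (hα : mdeg α = mdeg γ₀) (hlt : toLex γ₀ < toLex α) :
      a α = 0 := by
    by_contra hα0
    exact (hmax ⟨hα.trans hγ₀N, hα0⟩ hlt.le).not_gt hlt
  have hnormSq := h γ₀ hγ₀N
  rw [finsum_Fset_eq_normSq a γ₀ hvanish, ofReal_eq_zero, normSq_eq_zero] at hnormSq
  exact hγ₀ hnormSq

/-- If `∑_{(α,β) ∈ F_γ} a^α conj(a^β) = 0` for every multi-index `γ` with `|γ| = N ≥ 1`,
then `a^γ = 0` for every `γ` with `|γ| = N`. -/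
theorem stmt2 {d N : ℕ} (hd : 1 ≤ d) (hN : 1 ≤ N) (a : (Fin d → ℕ) → ℂ)
    (h : ∀ γ : Fin d → ℕ, mdeg γ = N →
      ∑ᶠ p ∈ Fset γ, a p.1 * (starRingEnd ℂ) (a p.2) = 0) :
    ∀ γ : Fin d → ℕ, mdeg γ = N → a γ = 0 :=
  stmt2_general a h
end
end
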